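/- Suppose min_k π_k ≥ λ > 0, min_{k≠l} π_{kl} ≥ λ* > 0, n · max_{k≠l} |Δ_{kl}| ≤ C₁, n ≤ N, and there are constants C₂, C₃, C₄, C₅ > 0 and β > 0 such that N^{-1} Σ_k Y_k(0)² < C₂, N^{-1} Σ_k (Y_k(t) − Y_k(s))² ≤ C₃|t−s|^{2β}, N^{-1} Σ_k Y_k(0)⁴ < C₄ and N^{-1} Σ_k (Y_k(t) − Y_k(s))⁴ < C₅|t−s|^{4β} for all s,t ∈ [0,T]. Then there exists a constant C₁₁, depending only on these constants and T, such that for all (s,t) ∈ [0,T]², n² · E[{γ̂_N(t,t) − γ_N(t,t) − γ̂_N(s,s) + γ_N(s,s)}²] ≤ C₁₁ · [n^{-1} + max_{(k,l,k',l') distinct} |E[(I_k I_l − π_{kl})(I_{k'} I_{l'} − π_{k'l'})]|] · |t−s|^{2β}, where I_k is the sample membership indicator of unit k. -/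

import Mathlib

/-
Put `y̌_k = Y_k / π_k` and `c_{kl} = (y̌_k(t) y̌_l(t) - y̌_k(s) y̌_l(s)) Δ_{kl} / π_{kl}`. Then
`γ̂_N(t,t) - γ_N(t,t) - γ̂_N(s,s) + γ_N(s,s) = N⁻² ∑_{k,l} c_{kl} (I_k I_l - π_{kl})`,
a centred quadratic statistic of the sample. Its diagonal part `∑_k c_{kk} (I_k - π_k)` has
second moment `∑_{k,l} c_{kk} c_{ll} Δ_{kl}`, small because `|Δ_{kl}| ≤ C₁ / n` off the diagonal.
In the square of the off-diagonal part, a cross moment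
`E[(I_k I_l - π_{kl})(I_{k'} I_{l'} - π_{k'l'})]` is at most `D₄` when the four units are
distinct and at most `1` otherwise, which leaves `D₄ (∑ |c|)² + 4 ∑_k (∑_l |c_{kl}|)²`.
Off the diagonal `|c_{kl}| = O(n⁻¹) |Y_k(t) Y_l(t) - Y_k(s) Y_l(s)|`, and Cauchy–Schwarz against
the second and fourth moment assumptions turns every coefficient sum into a multiple of
`|t - s|^{2β}`; finally `n ≤ N` absorbs the powers of `N`.
-/

open Finset MeasureTheory ProbabilityTheory Filter Topology

noncomputable section

/-- Expectation of `f` under a sampling design `p` on the population `{0, …, N-1}`. -/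
def dExp (N : ℕ) (p : Finset ℕ → ℝ) (f : Finset ℕ → ℝ) : ℝ :=
  ∑ s ∈ (Finset.range N).powerset, p s * f s

/-- Variance of `f` under the sampling design `p`. -/
def dVar (N : ℕ) (p : Finset ℕ → ℝ) (f : Finset ℕ → ℝ) : ℝ :=
  dExp N p (fun s => f s ^ 2) - dExp N p f ^ 2

/-- `p` is a fixed-size-`n` sampling design on the population `{0, …, N-1}`. -/
structure IsDesign (N n : ℕ) (p : Finset ℕ → ℝ) : Prop where
  nonneg : ∀ s, 0 ≤ p s
  sum_one : ∑ s ∈ (Finset.range N).powerset, p s = 1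
  supp : ∀ s, p s ≠ 0 → s ⊆ Finset.range N ∧ s.card = n

/-- First-order inclusion probability `π_k`. -/
def pi1 (N : ℕ) (p : Finset ℕ → ℝ) (k : ℕ) : ℝ :=
  dExp N p fun s => if k ∈ s then 1 else 0

/-- Second-order inclusion probability `π_{kl}` (it equals `π_k` on the diagonal). -/
def pi2 (N : ℕ) (p : Finset ℕ → ℝ) (k l : ℕ) : ℝ :=
  dExp N p fun s => if k ∈ s ∧ l ∈ s then 1 else 0

/-- `Δ_{kl} = π_{kl} - π_k π_l`; on the diagonal it equals `π_k (1 - π_k)`. -/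
def Delta (N : ℕ) (p : Finset ℕ → ℝ) (k l : ℕ) : ℝ :=
  pi2 N p k l - pi1 N p k * pi1 N p l

/-- Sample membership indicator `I_k`. -/
def ind (k : ℕ) (s : Finset ℕ) : ℝ := if k ∈ s then 1 else 0

/-- Population mean trajectory `μ_N`. -/
def popMean (N : ℕ) (Y : ℕ → ℝ → ℝ) (t : ℝ) : ℝ :=
  (N : ℝ)⁻¹ * ∑ k ∈ Finset.range N, Y k t

/-- Horvitz–Thompson estimator of the mean curve computed from the sample `s`. -/
def htMean (N : ℕ) (p : Finset ℕ → ℝ) (Y : ℕ → ℝ → ℝ) (s : Finset ℕ) (t : ℝ) : ℝ :=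
  (N : ℝ)⁻¹ * ∑ k ∈ s, Y k t / pi1 N p k

/-- Covariance function `γ_N(u,v)` of the Horvitz–Thompson estimator under the design. -/
def htCov (N : ℕ) (p : Finset ℕ → ℝ) (Y : ℕ → ℝ → ℝ) (u v : ℝ) : ℝ :=
  dExp N p (fun s => htMean N p Y s u * htMean N p Y s v) -
    dExp N p (fun s => htMean N p Y s u) * dExp N p (fun s => htMean N p Y s v)

/-- Horvitz–Thompson covariance estimator `γ̂(u,v)`. -/
def htCovEst (N : ℕ) (p : Finset ℕ → ℝ) (Y : ℕ → ℝ → ℝ) (s : Finset ℕ) (u v : ℝ) : ℝ :=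
  ((N : ℝ) ^ 2)⁻¹ * ∑ k ∈ s, ∑ l ∈ s,
    Y k u / pi1 N p k * (Y l v / pi1 N p l) * (Delta N p k l / pi2 N p k l)

/-- Mesh (largest gap) of a discretization grid `pts` with `d` subintervals. -/
def meshR (d : ℕ) (hd : 0 < d) (pts : Fin (d + 1) → ℝ) : ℝ :=
  Finset.univ.sup' (⟨⟨0, hd⟩, Finset.mem_univ _⟩ : (Finset.univ : Finset (Fin d)).Nonempty)
    fun i : Fin d => |pts i.succ - pts i.castSucc|

section DesignExpectation

variable {N n : ℕ} {p : Finset ℕ → ℝ}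

lemma dExp_congr {f g : Finset ℕ → ℝ} (h : ∀ s, p s ≠ 0 → f s = g s) :
    dExp N p f = dExp N p g :=
  Finset.sum_congr rfl fun s _ => by
    by_cases hp : p s = 0
    · simp [hp]
    · rw [h s hp]

lemma dExp_add (f g : Finset ℕ → ℝ) :
    dExp N p (fun s => f s + g s) = dExp N p f + dExp N p g := by
  simp only [dExp, mul_add, Finset.sum_add_distrib]

lemma dExp_sub (f g : Finset ℕ → ℝ) :
    dExp N p (fun s => f s - g s) = dExp N p f - dExp N p g := by
  simp only [dExp, mul_sub, Finset.sum_sub_distrib]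

lemma dExp_const_mul (c : ℝ) (f : Finset ℕ → ℝ) :
    dExp N p (fun s => c * f s) = c * dExp N p f := by
  simp only [dExp, Finset.mul_sum, mul_left_comm]

lemma dExp_sum {ι : Type*} (A : Finset ι) (f : ι → Finset ℕ → ℝ) :
    dExp N p (fun s => ∑ i ∈ A, f i s) = ∑ i ∈ A, dExp N p (f i) := by
  simp only [dExp, Finset.mul_sum]
  exact Finset.sum_comm

lemma dExp_mono (hp : ∀ s, 0 ≤ p s) {f g : Finset ℕ → ℝ} (h : ∀ s, f s ≤ g s) :
    dExp N p f ≤ dExp N p g :=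
  Finset.sum_le_sum fun s _ => mul_le_mul_of_nonneg_left (h s) (hp s)

lemma IsDesign.dExp_const (hd : IsDesign N n p) (c : ℝ) : dExp N p (fun _ => c) = c := by
  rw [dExp, ← Finset.sum_mul, hd.sum_one, one_mul]

lemma IsDesign.dExp_mem_Icc (hd : IsDesign N n p) {f : Finset ℕ → ℝ} {a b : ℝ}
    (hf : ∀ s, f s ∈ Set.Icc a b) : dExp N p f ∈ Set.Icc a b := by
  constructor
  · calc a = dExp N p (fun _ => a) := (hd.dExp_const a).symm
      _ ≤ dExp N p f := dExp_mono hd.nonneg fun s => (hf s).1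
  · calc dExp N p f ≤ dExp N p (fun _ => b) := dExp_mono hd.nonneg fun s => (hf s).2
      _ = b := hd.dExp_const b

lemma IsDesign.dExp_sub_mul_sub (hd : IsDesign N n p) (f g : Finset ℕ → ℝ) :
    dExp N p (fun s => (f s - dExp N p f) * (g s - dExp N p g))
      = dExp N p (fun s => f s * g s) - dExp N p f * dExp N p g := by
  have h : ∀ s, (f s - dExp N p f) * (g s - dExp N p g)
      = (f s * g s - dExp N p f * g s) - (dExp N p g * f s - dExp N p f * dExp N p g) :=
    fun s => by ring
  simp only [h, dExp_sub, dExp_const_mul, hd.dExp_const]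
  ring

end DesignExpectation

section Inclusion

variable {N n : ℕ} {p : Finset ℕ → ℝ}

lemma ind_mem_Icc (k : ℕ) (s : Finset ℕ) : ind k s ∈ Set.Icc (0 : ℝ) 1 := by
  unfold ind; split_ifs <;> norm_num

lemma ind_mul_self (k : ℕ) (s : Finset ℕ) : ind k s * ind k s = ind k s := by
  unfold ind; split_ifs <;> norm_num

lemma dExp_ind (k : ℕ) : dExp N p (ind k) = pi1 N p k := rfl

lemma dExp_ind_mul_ind (k l : ℕ) : dExp N p (fun s => ind k s * ind l s) = pi2 N p k l := by
  unfold pi2 ind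
  congr 1
  funext s
  split_ifs <;> simp_all

lemma pi2_self (k : ℕ) : pi2 N p k k = pi1 N p k := by
  simp only [pi2, pi1, and_self]

lemma pi2_comm (k l : ℕ) : pi2 N p k l = pi2 N p l k := by
  simp only [pi2, and_comm]

lemma Delta_comm (k l : ℕ) : Delta N p k l = Delta N p l k := by
  rw [Delta, Delta, pi2_comm, mul_comm]

lemma Delta_self_le_one (k : ℕ) : Delta N p k k ≤ 1 := by
  rw [Delta, pi2_self]
  nlinarith [sq_nonneg (pi1 N p k - 1 / 2)]

lemma IsDesign.pi1_mem_Icc (hd : IsDesign N n p) (k : ℕ) : pi1 N p k ∈ Set.Icc 0 1 :=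
  hd.dExp_mem_Icc (ind_mem_Icc k)

lemma IsDesign.pi2_mem_Icc (hd : IsDesign N n p) (k l : ℕ) : pi2 N p k l ∈ Set.Icc 0 1 := by
  rw [← dExp_ind_mul_ind]
  refine hd.dExp_mem_Icc fun s => ?_
  obtain ⟨hk0, hk1⟩ := ind_mem_Icc k s
  obtain ⟨hl0, hl1⟩ := ind_mem_Icc l s
  exact ⟨mul_nonneg hk0 hl0, mul_le_one₀ hk1 hl0 hl1⟩

lemma sum_eq_sum_range_ind_mul {s : Finset ℕ} (hs : s ⊆ Finset.range N) (f : ℕ → ℝ) :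
    ∑ k ∈ s, f k = ∑ k ∈ Finset.range N, ind k s * f k := by
  simp only [ind, ite_mul, one_mul, zero_mul, ← Finset.sum_filter, Finset.filter_mem_eq_inter,
    Finset.inter_eq_right.mpr hs]

lemma IsDesign.dExp_centered_mul (hd : IsDesign N n p) (x y : ℕ → ℝ) :
    dExp N p (fun s => (∑ k ∈ Finset.range N, x k * (ind k s - pi1 N p k)) *
        ∑ l ∈ Finset.range N, y l * (ind l s - pi1 N p l))
      = ∑ k ∈ Finset.range N, ∑ l ∈ Finset.range N, x k * y l * Delta N p k l := by
  simp only [Finset.sum_mul_sum, dExp_sum]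
  refine Finset.sum_congr rfl fun k _ => Finset.sum_congr rfl fun l _ => ?_
  have hcov := hd.dExp_sub_mul_sub (ind k) (ind l)
  rw [dExp_ind, dExp_ind, dExp_ind_mul_ind] at hcov
  rw [Delta, ← hcov, ← dExp_const_mul]
  exact dExp_congr fun s _ => by ring

lemma IsDesign.dExp_linear_mul_sub (hd : IsDesign N n p) (x y : ℕ → ℝ) :
    dExp N p (fun s => (∑ k ∈ Finset.range N, ind k s * x k) * ∑ l ∈ Finset.range N, ind l s * y l)
      - dExp N p (fun s => ∑ k ∈ Finset.range N, ind k s * x k)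
        * dExp N p (fun s => ∑ l ∈ Finset.range N, ind l s * y l)
      = ∑ k ∈ Finset.range N, ∑ l ∈ Finset.range N, x k * y l * Delta N p k l := by
  have hcentre : ∀ (z : ℕ → ℝ) s, ∑ k ∈ Finset.range N, ind k s * z k
      - dExp N p (fun s => ∑ k ∈ Finset.range N, ind k s * z k)
        = ∑ k ∈ Finset.range N, z k * (ind k s - pi1 N p k) := fun z s => by
    simp only [dExp_sum, mul_comm (ind _ _), dExp_const_mul, dExp_ind, ← Finset.sum_sub_distrib,
      mul_sub]
  rw [← hd.dExp_sub_mul_sub, ← hd.dExp_centered_mul]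
  simp only [hcentre]

end Inclusion

section FiniteSums

variable {ι : Type*} (R : Finset ι)

lemma sq_sum_abs_le_card_mul_sum_sq (a : ι → ℝ) :
    (∑ k ∈ R, |a k|) ^ 2 ≤ R.card * ∑ k ∈ R, a k ^ 2 := by
  simpa only [sq_abs] using sq_sum_le_card_mul_sum_sq (s := R) (f := fun k => |a k|)

lemma sum_mul_mul_overlap_eq [DecidableEq ι] (a : ι → ι → ℝ)
    (hsym : ∀ k l, a k l = a l k) (D : ℝ) :
    ∑ k ∈ R, ∑ l ∈ R, ∑ k' ∈ R, ∑ l' ∈ R, a k l * a k' l' *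
        (D + ((if k = k' then 1 else 0) + (if k = l' then 1 else 0)
          + (if l = k' then 1 else 0) + (if l = l' then 1 else 0)))
      = D * (∑ k ∈ R, ∑ l ∈ R, a k l) ^ 2 + 4 * ∑ k ∈ R, (∑ l ∈ R, a k l) ^ 2 := by
  set r : ι → ℝ := fun k => ∑ l ∈ R, a k l
  have htotal : ∑ k ∈ R, ∑ l ∈ R, a k l = ∑ k ∈ R, r k := rfl
  have hcol : ∀ l, ∑ k ∈ R, a k l = r l := fun l => Finset.sum_congr rfl fun k _ => hsym k l
  have hinner : ∀ k ∈ R, ∀ l ∈ R, ∑ k' ∈ R, ∑ l' ∈ R, a k' l' *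
      (D + ((if k = k' then 1 else 0) + (if k = l' then 1 else 0)
        + (if l = k' then 1 else 0) + (if l = l' then 1 else 0)))
        = D * ∑ k ∈ R, r k + 2 * r k + 2 * r l := by
    intro k hk l hl
    simp only [mul_add, mul_ite, mul_one, mul_zero, Finset.sum_add_distrib, Finset.sum_ite_irrel,
      Finset.sum_const_zero, Finset.sum_ite_eq, if_pos hk, if_pos hl, hcol, ← Finset.sum_mul]
    ring
  have hrow : ∑ k ∈ R, ∑ l ∈ R, a k l * r k = ∑ k ∈ R, r k ^ 2 :=
    Finset.sum_congr rfl fun k _ => by rw [← Finset.sum_mul, sq]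
  have hcolsum : ∑ k ∈ R, ∑ l ∈ R, a k l * r l = ∑ k ∈ R, r k ^ 2 := by
    rw [Finset.sum_comm]
    exact Finset.sum_congr rfl fun l _ => by rw [← Finset.sum_mul, hcol, sq]
  have hsplit : ∀ k l, a k l * (D * ∑ k ∈ R, r k + 2 * r k + 2 * r l)
      = D * (∑ k ∈ R, r k) * a k l + 2 * (a k l * r k) + 2 * (a k l * r l) := fun k l => by
    ring
  calc ∑ k ∈ R, ∑ l ∈ R, ∑ k' ∈ R, ∑ l' ∈ R, a k l * a k' l' *
        (D + ((if k = k' then 1 else 0) + (if k = l' then 1 else 0)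
          + (if l = k' then 1 else 0) + (if l = l' then 1 else 0)))
      = ∑ k ∈ R, ∑ l ∈ R, a k l * (D * ∑ k ∈ R, r k + 2 * r k + 2 * r l) := by
        refine Finset.sum_congr rfl fun k hk => Finset.sum_congr rfl fun l hl => ?_
        rw [← hinner k hk l hl, Finset.mul_sum]
        simp only [Finset.mul_sum, mul_assoc]
    _ = D * (∑ k ∈ R, r k) ^ 2 + 4 * ∑ k ∈ R, r k ^ 2 := by
        simp only [hsplit, Finset.sum_add_distrib, ← Finset.mul_sum, htotal, hrow, hcolsum]
        ring

lemma sum_sq_mul_self_sub_mul_self_le (x y : ι → ℝ) :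
    ∑ k ∈ R, (x k * x k - y k * y k) ^ 2
      ≤ √(∑ k ∈ R, (x k + y k) ^ 4) * √(∑ k ∈ R, (x k - y k) ^ 4) := by
  have h := Real.sum_mul_le_sqrt_mul_sqrt R (fun k => (x k + y k) ^ 2) (fun k => (x k - y k) ^ 2)
  simp only [← pow_mul] at h
  convert h using 2 with k
  ring

lemma sum_sq_sum_abs_mul_sub_mul_le (x y : ι → ℝ) :
    ∑ k ∈ R, (∑ l ∈ R, |x k * x l - y k * y l|) ^ 2
      ≤ 2 * R.card * (∑ k ∈ R, (x k - y k) ^ 2) * (∑ k ∈ R, x k ^ 2 + ∑ k ∈ R, y k ^ 2) := by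
  have hrow : ∀ k, ∑ l ∈ R, |x k * x l - y k * y l|
      ≤ |x k| * ∑ l ∈ R, |x l - y l| + |x k - y k| * ∑ l ∈ R, |y l| := fun k => by
    rw [Finset.mul_sum, Finset.mul_sum, ← Finset.sum_add_distrib]
    refine Finset.sum_le_sum fun l _ => ?_
    rw [show x k * x l - y k * y l = x k * (x l - y l) + (x k - y k) * y l by ring,
      ← abs_mul, ← abs_mul]
    exact abs_add_le _ _
  have hdiff := sq_sum_abs_le_card_mul_sum_sq R fun l => x l - y l
  have hy := sq_sum_abs_le_card_mul_sum_sq R y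
  calc ∑ k ∈ R, (∑ l ∈ R, |x k * x l - y k * y l|) ^ 2
      ≤ ∑ k ∈ R, 2 * ((|x k| * ∑ l ∈ R, |x l - y l|) ^ 2
          + (|x k - y k| * ∑ l ∈ R, |y l|) ^ 2) :=
        Finset.sum_le_sum fun k _ =>
          (pow_le_pow_left₀ (Finset.sum_nonneg fun l _ => abs_nonneg _) (hrow k) 2).trans add_sq_le
    _ = 2 * ((∑ l ∈ R, |x l - y l|) ^ 2 * ∑ k ∈ R, x k ^ 2
          + (∑ l ∈ R, |y l|) ^ 2 * ∑ k ∈ R, (x k - y k) ^ 2) := by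
        rw [Finset.mul_sum (a := (∑ l ∈ R, |x l - y l|) ^ 2),
          Finset.mul_sum (a := (∑ l ∈ R, |y l|) ^ 2), ← Finset.sum_add_distrib, Finset.mul_sum]
        exact Finset.sum_congr rfl fun k _ => by rw [mul_pow, mul_pow, sq_abs, sq_abs]; ring
    _ ≤ 2 * ((R.card * ∑ k ∈ R, (x k - y k) ^ 2) * ∑ k ∈ R, x k ^ 2
          + (R.card * ∑ k ∈ R, y k ^ 2) * ∑ k ∈ R, (x k - y k) ^ 2) := by
        gcongr
    _ = 2 * R.card * (∑ k ∈ R, (x k - y k) ^ 2) * (∑ k ∈ R, x k ^ 2 + ∑ k ∈ R, y k ^ 2) := by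
        ring

end FiniteSums

section SecondMoments

variable {N n : ℕ} {p : Finset ℕ → ℝ}

lemma IsDesign.dExp_sq_sum_centered_le (hd : IsDesign N n p) (a : ℕ → ℝ) {δ : ℝ} (hδ : 0 ≤ δ)
    (hΔ : ∀ k ∈ Finset.range N, ∀ l ∈ Finset.range N, k ≠ l → |Delta N p k l| ≤ δ) :
    dExp N p (fun s => (∑ k ∈ Finset.range N, a k * (ind k s - pi1 N p k)) ^ 2)
      ≤ ∑ k ∈ Finset.range N, a k ^ 2 + δ * (∑ k ∈ Finset.range N, |a k|) ^ 2 := by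
  have hterm : ∀ k ∈ Finset.range N, ∀ l ∈ Finset.range N, a k * a l * Delta N p k l
      ≤ (if k = l then a k ^ 2 else 0) + δ * (|a k| * |a l|) := by
    intro k hk l hl
    split_ifs with hkl
    · subst hkl
      nlinarith [Delta_self_le_one (N := N) (p := p) k, sq_nonneg (a k), abs_nonneg (a k)]
    · calc a k * a l * Delta N p k l ≤ |a k| * |a l| * |Delta N p k l| := by
            rw [← abs_mul, ← abs_mul]; exact le_abs_self _
        _ ≤ 0 + δ * (|a k| * |a l|) := by
            rw [zero_add, mul_comm δ]
            exact mul_le_mul_of_nonneg_left (hΔ k hk l hl hkl) (by positivity)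
  have hδsum : ∑ k ∈ Finset.range N, ∑ l ∈ Finset.range N, δ * (|a k| * |a l|)
      = δ * (∑ k ∈ Finset.range N, |a k|) ^ 2 := by
    rw [sq, Finset.sum_mul_sum, Finset.mul_sum]
    simp only [Finset.mul_sum]
  calc dExp N p (fun s => (∑ k ∈ Finset.range N, a k * (ind k s - pi1 N p k)) ^ 2)
      = ∑ k ∈ Finset.range N, ∑ l ∈ Finset.range N, a k * a l * Delta N p k l := by
        simp only [sq]
        exact hd.dExp_centered_mul a a
    _ ≤ ∑ k ∈ Finset.range N, ∑ l ∈ Finset.range N,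
          ((if k = l then a k ^ 2 else 0) + δ * (|a k| * |a l|)) :=
        Finset.sum_le_sum fun k hk => Finset.sum_le_sum fun l hl => hterm k hk l hl
    _ = ∑ k ∈ Finset.range N, a k ^ 2 + δ * (∑ k ∈ Finset.range N, |a k|) ^ 2 := by
        rw [← hδsum, ← Finset.sum_add_distrib]
        refine Finset.sum_congr rfl fun k hk => ?_
        rw [Finset.sum_add_distrib, Finset.sum_ite_eq, if_pos hk]

lemma dExp_sq_sum_sum (R : Finset ℕ) (f : ℕ → ℕ → Finset ℕ → ℝ) :
    dExp N p (fun s => (∑ k ∈ R, ∑ l ∈ R, f k l s) ^ 2)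
      = ∑ k ∈ R, ∑ l ∈ R, ∑ k' ∈ R, ∑ l' ∈ R, dExp N p (fun s => f k l s * f k' l' s) := by
  simp only [sq, Finset.sum_mul]
  simp only [Finset.mul_sum, dExp_sum]

lemma IsDesign.abs_dExp_pairDev_mul_le_one (hd : IsDesign N n p) (k l k' l' : ℕ) :
    |dExp N p (fun s => (ind k s * ind l s - pi2 N p k l) *
        (ind k' s * ind l' s - pi2 N p k' l'))| ≤ 1 := by
  have hdev : ∀ a b s, |ind a s * ind b s - pi2 N p a b| ≤ 1 := fun a b s => by
    obtain ⟨ha0, ha1⟩ := ind_mem_Icc a s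
    obtain ⟨hb0, hb1⟩ := ind_mem_Icc b s
    obtain ⟨h0, h1⟩ := hd.pi2_mem_Icc a b
    rw [abs_sub_le_iff]
    constructor <;> nlinarith
  rw [abs_le]
  refine hd.dExp_mem_Icc fun s => abs_le.mp ?_
  rw [abs_mul]
  exact mul_le_one₀ (hdev k l s) (abs_nonneg _) (hdev k' l' s)

lemma IsDesign.abs_dExp_pairDev_mul_le (hd : IsDesign N n p) {D₄ : ℝ} (hD₄ : 0 ≤ D₄)
    (hdist : ∀ k ∈ Finset.range N, ∀ l ∈ Finset.range N, ∀ k' ∈ Finset.range N,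
      ∀ l' ∈ Finset.range N, k ≠ l → k ≠ k' → k ≠ l' → l ≠ k' → l ≠ l' → k' ≠ l' →
        |dExp N p (fun s => (ind k s * ind l s - pi2 N p k l) *
          (ind k' s * ind l' s - pi2 N p k' l'))| ≤ D₄)
    {k l k' l' : ℕ} (hk : k ∈ Finset.range N) (hl : l ∈ Finset.range N)
    (hk' : k' ∈ Finset.range N) (hl' : l' ∈ Finset.range N) (hkl : k ≠ l) (hk'l' : k' ≠ l') :
    |dExp N p (fun s => (ind k s * ind l s - pi2 N p k l) *
        (ind k' s * ind l' s - pi2 N p k' l'))|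
      ≤ D₄ + ((if k = k' then 1 else 0) + (if k = l' then 1 else 0)
          + (if l = k' then 1 else 0) + (if l = l' then 1 else 0)) := by
  have hone := hd.abs_dExp_pairDev_mul_le_one k l k' l'
  split_ifs <;>
    first
    | linarith
    | simpa using hdist k hk l hl k' hk' l' hl' hkl ‹k ≠ k'› ‹k ≠ l'› ‹l ≠ k'› ‹l ≠ l'› hk'l'

lemma IsDesign.dExp_sq_sum_pairDev_le (hd : IsDesign N n p) (c : ℕ → ℕ → ℝ)
    (hsym : ∀ k l, c k l = c l k) (hdiag : ∀ k, c k k = 0) {D₄ : ℝ} (hD₄ : 0 ≤ D₄)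
    (hdist : ∀ k ∈ Finset.range N, ∀ l ∈ Finset.range N, ∀ k' ∈ Finset.range N,
      ∀ l' ∈ Finset.range N, k ≠ l → k ≠ k' → k ≠ l' → l ≠ k' → l ≠ l' → k' ≠ l' →
        |dExp N p (fun s => (ind k s * ind l s - pi2 N p k l) *
          (ind k' s * ind l' s - pi2 N p k' l'))| ≤ D₄) :
    dExp N p (fun s => (∑ k ∈ Finset.range N, ∑ l ∈ Finset.range N,
        c k l * (ind k s * ind l s - pi2 N p k l)) ^ 2)
      ≤ D₄ * (∑ k ∈ Finset.range N, ∑ l ∈ Finset.range N, |c k l|) ^ 2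
        + 4 * ∑ k ∈ Finset.range N, (∑ l ∈ Finset.range N, |c k l|) ^ 2 := by
  rw [dExp_sq_sum_sum, ← sum_mul_mul_overlap_eq _ _ (fun k l => by rw [hsym]) D₄]
  refine Finset.sum_le_sum fun k hk => Finset.sum_le_sum fun l hl =>
    Finset.sum_le_sum fun k' hk' => Finset.sum_le_sum fun l' hl' => ?_
  rcases eq_or_ne k l with rfl | hkl
  · simp [hdiag, dExp]
  rcases eq_or_ne k' l' with rfl | hk'l'
  · simp [hdiag, dExp]
  have hprod : ∀ s, c k l * (ind k s * ind l s - pi2 N p k l) *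
      (c k' l' * (ind k' s * ind l' s - pi2 N p k' l'))
        = c k l * c k' l' * ((ind k s * ind l s - pi2 N p k l) *
          (ind k' s * ind l' s - pi2 N p k' l')) := fun s => by ring
  simp only [hprod, dExp_const_mul]
  calc _ ≤ |c k l * c k' l' * dExp N p (fun s => (ind k s * ind l s - pi2 N p k l) *
          (ind k' s * ind l' s - pi2 N p k' l'))| := le_abs_self _
    _ = |c k l| * |c k' l'| * |dExp N p (fun s => (ind k s * ind l s - pi2 N p k l) *
          (ind k' s * ind l' s - pi2 N p k' l'))| := by rw [abs_mul, abs_mul]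
    _ ≤ _ := mul_le_mul_of_nonneg_left
        (hd.abs_dExp_pairDev_mul_le hD₄ hdist hk hl hk' hl' hkl hk'l') (by positivity)

lemma sum_sum_pairDev_eq (c : ℕ → ℕ → ℝ) (s : Finset ℕ) :
    ∑ k ∈ Finset.range N, ∑ l ∈ Finset.range N, c k l * (ind k s * ind l s - pi2 N p k l)
      = ∑ k ∈ Finset.range N, c k k * (ind k s - pi1 N p k)
        + ∑ k ∈ Finset.range N, ∑ l ∈ Finset.range N,
            (if k = l then 0 else c k l) * (ind k s * ind l s - pi2 N p k l) := by
  rw [← Finset.sum_add_distrib]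
  refine Finset.sum_congr rfl fun k hk => ?_
  have hsplit : ∀ l, c k l * (ind k s * ind l s - pi2 N p k l)
      = (if k = l then c k l * (ind k s * ind l s - pi2 N p k l) else 0)
        + (if k = l then 0 else c k l) * (ind k s * ind l s - pi2 N p k l) := fun l => by
    split_ifs <;> ring
  rw [Finset.sum_congr rfl fun l _ => hsplit l, Finset.sum_add_distrib, Finset.sum_ite_eq,
    if_pos hk, ind_mul_self, pi2_self]

lemma IsDesign.dExp_sq_sum_centered_le_of_abs_le (hd : IsDesign N n p) (a α : ℕ → ℝ) {δ : ℝ}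
    (hδ : 0 ≤ δ)
    (hΔ : ∀ k ∈ Finset.range N, ∀ l ∈ Finset.range N, k ≠ l → |Delta N p k l| ≤ δ)
    (ha : ∀ k ∈ Finset.range N, |a k| ≤ α k) :
    dExp N p (fun s => (∑ k ∈ Finset.range N, a k * (ind k s - pi1 N p k)) ^ 2)
      ≤ (1 + δ * N) * ∑ k ∈ Finset.range N, α k ^ 2 :=
  calc _ ≤ ∑ k ∈ Finset.range N, a k ^ 2 + δ * (∑ k ∈ Finset.range N, |a k|) ^ 2 :=
        hd.dExp_sq_sum_centered_le a hδ hΔ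
    _ ≤ ∑ k ∈ Finset.range N, a k ^ 2 + δ * (N * ∑ k ∈ Finset.range N, a k ^ 2) := by
        gcongr
        simpa using sq_sum_abs_le_card_mul_sum_sq (Finset.range N) a
    _ = (1 + δ * N) * ∑ k ∈ Finset.range N, a k ^ 2 := by ring
    _ ≤ (1 + δ * N) * ∑ k ∈ Finset.range N, α k ^ 2 := by
        gcongr (1 + δ * N) * ?_
        exact Finset.sum_le_sum fun k hk =>
          sq_le_sq' (abs_le.mp (ha k hk)).1 (abs_le.mp (ha k hk)).2

lemma IsDesign.dExp_sq_sum_offDiag_pairDev_le (hd : IsDesign N n p) (c : ℕ → ℕ → ℝ)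
    (hsym : ∀ k l, c k l = c l k) {D₄ : ℝ} (hD₄ : 0 ≤ D₄)
    (hdist : ∀ k ∈ Finset.range N, ∀ l ∈ Finset.range N, ∀ k' ∈ Finset.range N,
      ∀ l' ∈ Finset.range N, k ≠ l → k ≠ k' → k ≠ l' → l ≠ k' → l ≠ l' → k' ≠ l' →
        |dExp N p (fun s => (ind k s * ind l s - pi2 N p k l) *
          (ind k' s * ind l' s - pi2 N p k' l'))| ≤ D₄)
    (β : ℕ → ℕ → ℝ) (hβ0 : ∀ k l, 0 ≤ β k l)
    (hβ : ∀ k ∈ Finset.range N, ∀ l ∈ Finset.range N, k ≠ l → |c k l| ≤ β k l) :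
    dExp N p (fun s => (∑ k ∈ Finset.range N, ∑ l ∈ Finset.range N,
        (if k = l then 0 else c k l) * (ind k s * ind l s - pi2 N p k l)) ^ 2)
      ≤ (D₄ * N + 4) * ∑ k ∈ Finset.range N, (∑ l ∈ Finset.range N, β k l) ^ 2 := by
  set r : ℕ → ℝ := fun k => ∑ l ∈ Finset.range N, |if k = l then 0 else c k l|
  have hr : ∀ k ∈ Finset.range N, r k ≤ ∑ l ∈ Finset.range N, β k l := by
    refine fun k hk => Finset.sum_le_sum fun l hl => ?_
    split_ifs with hkl
    · simpa using hβ0 k l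
    · exact hβ k hk l hl hkl
  calc _ ≤ D₄ * (∑ k ∈ Finset.range N, r k) ^ 2 + 4 * ∑ k ∈ Finset.range N, r k ^ 2 :=
        hd.dExp_sq_sum_pairDev_le _ (fun k l => by simp only [@eq_comm _ k l, hsym k l])
          (fun k => if_pos rfl) hD₄ hdist
    _ ≤ D₄ * (N * ∑ k ∈ Finset.range N, r k ^ 2) + 4 * ∑ k ∈ Finset.range N, r k ^ 2 := by
        gcongr
        simpa using sq_sum_le_card_mul_sum_sq (s := Finset.range N) (f := r)
    _ = (D₄ * N + 4) * ∑ k ∈ Finset.range N, r k ^ 2 := by ring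
    _ ≤ _ := by
        gcongr with k hk
        exact hr k hk

lemma IsDesign.dExp_sq_sum_pairDev_le_of_bounds (hd : IsDesign N n p) (c : ℕ → ℕ → ℝ)
    (hsym : ∀ k l, c k l = c l k) {δ : ℝ} (hδ : 0 ≤ δ)
    (hΔ : ∀ k ∈ Finset.range N, ∀ l ∈ Finset.range N, k ≠ l → |Delta N p k l| ≤ δ)
    {D₄ : ℝ} (hD₄ : 0 ≤ D₄)
    (hdist : ∀ k ∈ Finset.range N, ∀ l ∈ Finset.range N, ∀ k' ∈ Finset.range N,
      ∀ l' ∈ Finset.range N, k ≠ l → k ≠ k' → k ≠ l' → l ≠ k' → l ≠ l' → k' ≠ l' →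
        |dExp N p (fun s => (ind k s * ind l s - pi2 N p k l) *
          (ind k' s * ind l' s - pi2 N p k' l'))| ≤ D₄)
    (α : ℕ → ℝ) (β : ℕ → ℕ → ℝ) (hβ0 : ∀ k l, 0 ≤ β k l)
    (hα : ∀ k ∈ Finset.range N, |c k k| ≤ α k)
    (hβ : ∀ k ∈ Finset.range N, ∀ l ∈ Finset.range N, k ≠ l → |c k l| ≤ β k l) :
    dExp N p (fun s => (∑ k ∈ Finset.range N, ∑ l ∈ Finset.range N,
        c k l * (ind k s * ind l s - pi2 N p k l)) ^ 2)
      ≤ 2 * ((1 + δ * N) * ∑ k ∈ Finset.range N, α k ^ 2)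
        + 2 * ((D₄ * N + 4) * ∑ k ∈ Finset.range N, (∑ l ∈ Finset.range N, β k l) ^ 2) := by
  set V : Finset ℕ → ℝ := fun s => ∑ k ∈ Finset.range N, c k k * (ind k s - pi1 N p k)
  set W : Finset ℕ → ℝ := fun s => ∑ k ∈ Finset.range N, ∑ l ∈ Finset.range N,
    (if k = l then 0 else c k l) * (ind k s * ind l s - pi2 N p k l)
  calc _ = dExp N p (fun s => (V s + W s) ^ 2) :=
        dExp_congr fun s _ => by rw [sum_sum_pairDev_eq]
    _ ≤ dExp N p (fun s => 2 * V s ^ 2 + 2 * W s ^ 2) :=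
        dExp_mono hd.nonneg fun s => add_sq_le.trans_eq (mul_add _ _ _)
    _ = 2 * dExp N p (fun s => V s ^ 2) + 2 * dExp N p (fun s => W s ^ 2) := by
        rw [dExp_add, dExp_const_mul, dExp_const_mul]
    _ ≤ _ := by
        gcongr
        · exact hd.dExp_sq_sum_centered_le_of_abs_le _ α hδ hΔ hα
        · exact hd.dExp_sq_sum_offDiag_pairDev_le c hsym hD₄ hdist β hβ0 hβ

end SecondMoments

section HorvitzThompson

variable {N n : ℕ} {p : Finset ℕ → ℝ} (Y : ℕ → ℝ → ℝ)

def covEstWeight (N : ℕ) (p : Finset ℕ → ℝ) (Y : ℕ → ℝ → ℝ) (v : ℝ) (k l : ℕ) : ℝ :=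
  Y k v / pi1 N p k * (Y l v / pi1 N p l) * (Delta N p k l / pi2 N p k l)

lemma htCovEst_self_eq {sam : Finset ℕ} (hsam : sam ⊆ Finset.range N) (v : ℝ) :
    htCovEst N p Y sam v v = ((N : ℝ) ^ 2)⁻¹ * ∑ k ∈ Finset.range N, ∑ l ∈ Finset.range N,
      ind k sam * ind l sam * covEstWeight N p Y v k l := by
  unfold htCovEst covEstWeight
  rw [sum_eq_sum_range_ind_mul hsam]
  congr 1
  refine Finset.sum_congr rfl fun k _ => ?_
  rw [sum_eq_sum_range_ind_mul hsam, Finset.mul_sum]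
  exact Finset.sum_congr rfl fun l _ => by ring

lemma IsDesign.htCov_self_eq (hd : IsDesign N n p) (v : ℝ) :
    htCov N p Y v v = ((N : ℝ) ^ 2)⁻¹ * ∑ k ∈ Finset.range N, ∑ l ∈ Finset.range N,
      Y k v / pi1 N p k * (Y l v / pi1 N p l) * Delta N p k l := by
  set L : Finset ℕ → ℝ := fun sam => ∑ k ∈ Finset.range N, ind k sam * (Y k v / pi1 N p k)
  have hmean : ∀ sam, p sam ≠ 0 → htMean N p Y sam v = (N : ℝ)⁻¹ * L sam := fun sam hsam => by
    rw [htMean, sum_eq_sum_range_ind_mul (hd.supp sam hsam).1]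
  have hsq : dExp N p (fun sam => htMean N p Y sam v * htMean N p Y sam v)
      = ((N : ℝ) ^ 2)⁻¹ * dExp N p (fun sam => L sam * L sam) := by
    rw [← dExp_const_mul]
    exact dExp_congr fun sam hsam => by rw [hmean sam hsam]; ring
  have hlin : dExp N p (fun sam => htMean N p Y sam v) = (N : ℝ)⁻¹ * dExp N p L := by
    rw [← dExp_const_mul]
    exact dExp_congr hmean
  rw [htCov, hsq, hlin, ← hd.dExp_linear_mul_sub]
  ring

lemma IsDesign.covEst_increment_eq (hd : IsDesign N n p)
    (hπ : ∀ k ∈ Finset.range N, ∀ l ∈ Finset.range N, pi2 N p k l ≠ 0) (s t : ℝ)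
    {sam : Finset ℕ} (hsam : p sam ≠ 0) :
    htCovEst N p Y sam t t - htCov N p Y t t - htCovEst N p Y sam s s + htCov N p Y s s
      = ((N : ℝ) ^ 2)⁻¹ * ∑ k ∈ Finset.range N, ∑ l ∈ Finset.range N,
          (covEstWeight N p Y t k l - covEstWeight N p Y s k l)
            * (ind k sam * ind l sam - pi2 N p k l) := by
  have hcov : ∀ v, htCov N p Y v v = ((N : ℝ) ^ 2)⁻¹ * ∑ k ∈ Finset.range N,
      ∑ l ∈ Finset.range N, pi2 N p k l * covEstWeight N p Y v k l := fun v => by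
    rw [hd.htCov_self_eq]
    congr 1
    refine Finset.sum_congr rfl fun k hk => Finset.sum_congr rfl fun l hl => ?_
    rw [covEstWeight]
    field_simp [hπ k hk l hl]
  have hsub := (hd.supp sam hsam).1
  rw [htCovEst_self_eq Y hsub, htCovEst_self_eq Y hsub, hcov, hcov]
  simp only [← mul_sub, ← mul_add, ← Finset.sum_sub_distrib, ← Finset.sum_add_distrib]
  congr 1
  exact Finset.sum_congr rfl fun k _ => Finset.sum_congr rfl fun l _ => by ring

lemma abs_covEstWeight_sub_le {lam ρ : ℝ} (hlam : 0 < lam) {k l : ℕ} (hk : lam ≤ pi1 N p k)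
    (hl : lam ≤ pi1 N p l) (hπ : 0 < pi2 N p k l) (hΔ : |Delta N p k l| ≤ ρ * pi2 N p k l)
    (s t : ℝ) :
    |covEstWeight N p Y t k l - covEstWeight N p Y s k l|
      ≤ ρ / lam ^ 2 * |Y k t * Y l t - Y k s * Y l s| := by
  have hk0 : 0 < pi1 N p k := hlam.trans_le hk
  have hl0 : 0 < pi1 N p l := hlam.trans_le hl
  have heq : covEstWeight N p Y t k l - covEstWeight N p Y s k l
      = (Y k t * Y l t - Y k s * Y l s) / (pi1 N p k * pi1 N p l)
        * (Delta N p k l / pi2 N p k l) := by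
    unfold covEstWeight
    field_simp
  have hρ : |Delta N p k l| / pi2 N p k l ≤ ρ := (div_le_iff₀ hπ).mpr hΔ
  have hlam2 : lam ^ 2 ≤ pi1 N p k * pi1 N p l := by
    rw [sq]; exact mul_le_mul hk hl hlam.le hk0.le
  rw [heq, abs_mul, abs_div, abs_div, abs_of_pos (mul_pos hk0 hl0), abs_of_pos hπ]
  calc |Y k t * Y l t - Y k s * Y l s| / (pi1 N p k * pi1 N p l) * (|Delta N p k l| / pi2 N p k l)
      ≤ |Y k t * Y l t - Y k s * Y l s| / lam ^ 2 * ρ := by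
        gcongr
    _ = ρ / lam ^ 2 * |Y k t * Y l t - Y k s * Y l s| := by ring

lemma IsDesign.dExp_sq_covEst_increment_le (hd : IsDesign N n p) {lam lamstar δ D₄ : ℝ}
    (hlam : 0 < lam) (hπ1 : ∀ k ∈ Finset.range N, lam ≤ pi1 N p k) (hlamstar : 0 < lamstar)
    (hπ2 : ∀ k ∈ Finset.range N, ∀ l ∈ Finset.range N, k ≠ l → lamstar ≤ pi2 N p k l)
    (hδ : 0 ≤ δ) (hΔ : ∀ k ∈ Finset.range N, ∀ l ∈ Finset.range N, k ≠ l → |Delta N p k l| ≤ δ)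
    (hD₄ : 0 ≤ D₄)
    (hdist : ∀ k ∈ Finset.range N, ∀ l ∈ Finset.range N, ∀ k' ∈ Finset.range N,
      ∀ l' ∈ Finset.range N, k ≠ l → k ≠ k' → k ≠ l' → l ≠ k' → l ≠ l' → k' ≠ l' →
        |dExp N p (fun s => (ind k s * ind l s - pi2 N p k l) *
          (ind k' s * ind l' s - pi2 N p k' l'))| ≤ D₄)
    (s t : ℝ) :
    dExp N p (fun sam => (htCovEst N p Y sam t t - htCov N p Y t t
        - htCovEst N p Y sam s s + htCov N p Y s s) ^ 2)
      ≤ ((N : ℝ) ^ 2)⁻¹ ^ 2 *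
        (2 * ((1 + δ * N) * ∑ k ∈ Finset.range N,
            (1 / lam ^ 2 * |Y k t * Y k t - Y k s * Y k s|) ^ 2)
          + 2 * ((D₄ * N + 4) * ∑ k ∈ Finset.range N, (∑ l ∈ Finset.range N,
            δ / lamstar / lam ^ 2 * |Y k t * Y l t - Y k s * Y l s|) ^ 2)) := by
  have hπ2pos : ∀ k ∈ Finset.range N, ∀ l ∈ Finset.range N, 0 < pi2 N p k l := fun k hk l hl => by
    rcases eq_or_ne k l with rfl | hkl
    · rw [pi2_self]; exact hlam.trans_le (hπ1 k hk)
    · exact hlamstar.trans_le (hπ2 k hk l hl hkl)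
  rw [dExp_congr fun sam hsam => by
    rw [hd.covEst_increment_eq Y (fun k hk l hl => (hπ2pos k hk l hl).ne') s t hsam, mul_pow],
    dExp_const_mul]
  gcongr
  refine hd.dExp_sq_sum_pairDev_le_of_bounds _
    (fun k l => by simp only [covEstWeight, Delta_comm k l, pi2_comm k l]; ring) hδ hΔ hD₄ hdist
    _ _ (fun k l => by positivity) (fun k hk => ?_) (fun k hk l hl hkl => ?_)
  · obtain ⟨h0, h1⟩ := hd.pi1_mem_Icc k
    refine abs_covEstWeight_sub_le Y hlam (hπ1 k hk) (hπ1 k hk) (hπ2pos k hk k hk) ?_ s t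
    -- `Δ_{kk} = π_k (1 - π_k)` lies between `0` and `π_{kk} = π_k`
    rw [one_mul, Delta, pi2_self]
    exact abs_le.mpr ⟨by nlinarith, by nlinarith⟩
  · refine abs_covEstWeight_sub_le Y hlam (hπ1 k hk) (hπ1 l hl) (hπ2pos k hk l hl) ?_ s t
    calc |Delta N p k l| ≤ δ := hΔ k hk l hl hkl
      _ = δ / lamstar * lamstar := by field_simp
      _ ≤ δ / lamstar * pi2 N p k l := by gcongr; exact hπ2 k hk l hl hkl

end HorvitzThompson

section PopulationMoments

variable {N : ℕ} {x y : ℕ → ℝ}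

lemma mean_pow_le_of_increment {Y : ℕ → ℝ → ℝ} {m : ℕ} (hm : Even m) {C C' e T v : ℝ}
    (hC' : 0 ≤ C') (he : 0 ≤ e) (hv : v ∈ Set.Icc 0 T)
    (h0 : (N : ℝ)⁻¹ * ∑ k ∈ Finset.range N, Y k 0 ^ m ≤ C)
    (hinc : (N : ℝ)⁻¹ * ∑ k ∈ Finset.range N, (Y k v - Y k 0) ^ m ≤ C' * |v - 0| ^ e) :
    (N : ℝ)⁻¹ * ∑ k ∈ Finset.range N, Y k v ^ m ≤ 2 ^ (m - 1) * (C + C' * T ^ e) := by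
  have hvT : |v - 0| ^ e ≤ T ^ e := by
    refine Real.rpow_le_rpow (abs_nonneg _) ?_ he
    rw [sub_zero, abs_of_nonneg hv.1]
    exact hv.2
  calc (N : ℝ)⁻¹ * ∑ k ∈ Finset.range N, Y k v ^ m
      = (N : ℝ)⁻¹ * ∑ k ∈ Finset.range N, (Y k 0 + (Y k v - Y k 0)) ^ m := by
        simp only [add_sub_cancel]
    _ ≤ (N : ℝ)⁻¹ * ∑ k ∈ Finset.range N, 2 ^ (m - 1) * (Y k 0 ^ m + (Y k v - Y k 0) ^ m) := by
        gcongr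
        exact hm.add_pow_le
    _ = 2 ^ (m - 1) * ((N : ℝ)⁻¹ * ∑ k ∈ Finset.range N, Y k 0 ^ m
          + (N : ℝ)⁻¹ * ∑ k ∈ Finset.range N, (Y k v - Y k 0) ^ m) := by
        rw [← Finset.mul_sum, Finset.sum_add_distrib]
        ring
    _ ≤ 2 ^ (m - 1) * (C + C' * T ^ e) :=
        mul_le_mul_of_nonneg_left
          (add_le_add h0 (hinc.trans (mul_le_mul_of_nonneg_left hvT hC'))) (by positivity)

lemma sum_sq_mul_self_sub_mul_self_le_of_moments (hN : 0 < N) {A₄ B₄ u : ℝ}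
    (hx : (N : ℝ)⁻¹ * ∑ k ∈ Finset.range N, x k ^ 4 ≤ A₄)
    (hy : (N : ℝ)⁻¹ * ∑ k ∈ Finset.range N, y k ^ 4 ≤ A₄)
    (hxy : (N : ℝ)⁻¹ * ∑ k ∈ Finset.range N, (x k - y k) ^ 4 ≤ B₄ * u ^ 4) :
    ∑ k ∈ Finset.range N, (x k * x k - y k * y k) ^ 2 ≤ N * u ^ 2 * √(16 * A₄ * B₄) := by
  have hN' : (0 : ℝ) < N := Nat.cast_pos.mpr hN
  rw [inv_mul_le_iff₀ hN'] at hx hy hxy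
  have hsum : ∑ k ∈ Finset.range N, (x k + y k) ^ 4 ≤ 16 * N * A₄ := calc
    ∑ k ∈ Finset.range N, (x k + y k) ^ 4
        ≤ ∑ k ∈ Finset.range N, 2 ^ (4 - 1) * (x k ^ 4 + y k ^ 4) :=
          Finset.sum_le_sum fun k _ => (by decide : Even 4).add_pow_le
    _ = 8 * (∑ k ∈ Finset.range N, x k ^ 4 + ∑ k ∈ Finset.range N, y k ^ 4) := by
          rw [← Finset.mul_sum, Finset.sum_add_distrib]
          norm_num
    _ ≤ 16 * N * A₄ := by linarith
  have hA : 0 ≤ 16 * N * A₄ := (Finset.sum_nonneg fun k _ => by positivity).trans hsum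
  calc ∑ k ∈ Finset.range N, (x k * x k - y k * y k) ^ 2
      ≤ √(∑ k ∈ Finset.range N, (x k + y k) ^ 4) * √(∑ k ∈ Finset.range N, (x k - y k) ^ 4) :=
        sum_sq_mul_self_sub_mul_self_le _ x y
    _ ≤ √(16 * N * A₄) * √(N * (B₄ * u ^ 4)) := by gcongr
    _ = N * u ^ 2 * √(16 * A₄ * B₄) := by
        rw [← Real.sqrt_mul hA, show 16 * N * A₄ * (N * (B₄ * u ^ 4))
          = (N * u ^ 2) ^ 2 * (16 * A₄ * B₄) by ring, Real.sqrt_mul (sq_nonneg _),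
          Real.sqrt_sq (by positivity)]

lemma sum_sq_sum_abs_mul_sub_mul_le_of_moments (hN : 0 < N) {A₂ B₂ u : ℝ}
    (hx : (N : ℝ)⁻¹ * ∑ k ∈ Finset.range N, x k ^ 2 ≤ A₂)
    (hy : (N : ℝ)⁻¹ * ∑ k ∈ Finset.range N, y k ^ 2 ≤ A₂)
    (hxy : (N : ℝ)⁻¹ * ∑ k ∈ Finset.range N, (x k - y k) ^ 2 ≤ B₂ * u ^ 2) :
    ∑ k ∈ Finset.range N, (∑ l ∈ Finset.range N, |x k * x l - y k * y l|) ^ 2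
      ≤ 4 * N ^ 3 * A₂ * B₂ * u ^ 2 := by
  have hN' : (0 : ℝ) < N := Nat.cast_pos.mpr hN
  rw [inv_mul_le_iff₀ hN'] at hx hy hxy
  have hB : 0 ≤ N * (B₂ * u ^ 2) := (Finset.sum_nonneg fun k _ => sq_nonneg _).trans hxy
  calc _ ≤ 2 * N * (∑ k ∈ Finset.range N, (x k - y k) ^ 2)
          * (∑ k ∈ Finset.range N, x k ^ 2 + ∑ k ∈ Finset.range N, y k ^ 2) := by
        simpa using sum_sq_sum_abs_mul_sub_mul_le (Finset.range N) x y
    _ ≤ 2 * N * (N * (B₂ * u ^ 2)) * (N * A₂ + N * A₂) := by gcongr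
    _ = 4 * N ^ 3 * A₂ * B₂ * u ^ 2 := by ring

end PopulationMoments

lemma sq_mul_inv_sq_sq_mul_le {n N a b C D : ℝ} (hn : 0 < n) (hnN : n ≤ N) (ha : 0 ≤ a) (hb : 0 ≤ b)
    (hC : 0 ≤ C) (hD : 0 ≤ D) :
    n ^ 2 * ((N ^ 2)⁻¹ ^ 2 *
        (2 * ((1 + C / n * N) * (a * N)) + 2 * ((D * N + 4) * (b / n ^ 2 * N ^ 3))))
      ≤ (2 * (1 + C) * a + 8 * b) * (n⁻¹ + D) := by
  have hN : 0 < N := hn.trans_le hnN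
  have hexpand : n ^ 2 * ((N ^ 2)⁻¹ ^ 2 *
      (2 * ((1 + C / n * N) * (a * N)) + 2 * ((D * N + 4) * (b / n ^ 2 * N ^ 3))))
      = 2 * a * (n ^ 2 / N ^ 3) + 2 * a * C * (n / N ^ 2) + 2 * b * D + 8 * b * N⁻¹ := by
    field_simp
    ring
  have h3 : n ^ 2 / N ^ 3 ≤ n⁻¹ := by
    rw [div_le_iff₀ (by positivity), inv_mul_eq_div, le_div_iff₀ hn, ← pow_succ]
    gcongr
  have h2 : n / N ^ 2 ≤ n⁻¹ := by
    rw [div_le_iff₀ (by positivity), inv_mul_eq_div, le_div_iff₀ hn, ← sq]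
    gcongr
  have h1 : N⁻¹ ≤ n⁻¹ := inv_anti₀ hn hnN
  rw [hexpand]
  nlinarith [mul_le_mul_of_nonneg_left h3 (by positivity : 0 ≤ 2 * a),
    mul_le_mul_of_nonneg_left h2 (by positivity : 0 ≤ 2 * a * C),
    mul_le_mul_of_nonneg_left h1 (by positivity : 0 ≤ 8 * b), mul_nonneg ha hD,
    mul_nonneg (mul_nonneg ha hC) hD, mul_nonneg hb hD, inv_nonneg.mpr hn.le]

lemma IsDesign.sq_mul_dExp_covEst_increment_le {N n : ℕ} {p : Finset ℕ → ℝ} (Y : ℕ → ℝ → ℝ)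
    (hd : IsDesign N n p) (hn : 0 < n) (hnN : n ≤ N)
    {lam lamstar C₁ D₄ A₂ A₄ B₂ B₄ u : ℝ}
    (hlam : 0 < lam) (hπ1 : ∀ k ∈ Finset.range N, lam ≤ pi1 N p k) (hlamstar : 0 < lamstar)
    (hπ2 : ∀ k ∈ Finset.range N, ∀ l ∈ Finset.range N, k ≠ l → lamstar ≤ pi2 N p k l)
    (hC₁ : 0 ≤ C₁)
    (hΔ : ∀ k ∈ Finset.range N, ∀ l ∈ Finset.range N, k ≠ l → (n : ℝ) * |Delta N p k l| ≤ C₁)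
    (hD₄ : 0 ≤ D₄)
    (hdist : ∀ k ∈ Finset.range N, ∀ l ∈ Finset.range N, ∀ k' ∈ Finset.range N,
      ∀ l' ∈ Finset.range N, k ≠ l → k ≠ k' → k ≠ l' → l ≠ k' → l ≠ l' → k' ≠ l' →
        |dExp N p (fun s => (ind k s * ind l s - pi2 N p k l) *
          (ind k' s * ind l' s - pi2 N p k' l'))| ≤ D₄)
    (s t : ℝ)
    (h2s : (N : ℝ)⁻¹ * ∑ k ∈ Finset.range N, Y k s ^ 2 ≤ A₂)
    (h2t : (N : ℝ)⁻¹ * ∑ k ∈ Finset.range N, Y k t ^ 2 ≤ A₂)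
    (h4s : (N : ℝ)⁻¹ * ∑ k ∈ Finset.range N, Y k s ^ 4 ≤ A₄)
    (h4t : (N : ℝ)⁻¹ * ∑ k ∈ Finset.range N, Y k t ^ 4 ≤ A₄)
    (hinc2 : (N : ℝ)⁻¹ * ∑ k ∈ Finset.range N, (Y k t - Y k s) ^ 2 ≤ B₂ * u ^ 2)
    (hinc4 : (N : ℝ)⁻¹ * ∑ k ∈ Finset.range N, (Y k t - Y k s) ^ 4 ≤ B₄ * u ^ 4) :
    (n : ℝ) ^ 2 * dExp N p (fun sam => (htCovEst N p Y sam t t - htCov N p Y t t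
        - htCovEst N p Y sam s s + htCov N p Y s s) ^ 2)
      ≤ (2 * (1 + C₁) * √(16 * A₄ * B₄) / lam ^ 4 + 32 * (C₁ / (lamstar * lam ^ 2)) ^ 2 * A₂ * B₂)
        * ((n : ℝ)⁻¹ + D₄) * u ^ 2 := by
  have hN : 0 < N := hn.trans_le hnN
  have hnR : (0 : ℝ) < n := Nat.cast_pos.mpr hn
  have hΔ' : ∀ k ∈ Finset.range N, ∀ l ∈ Finset.range N, k ≠ l → |Delta N p k l| ≤ C₁ / n :=
    fun k hk l hl hkl => by rw [le_div_iff₀ hnR, mul_comm]; exact hΔ k hk l hl hkl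
  have hdiag := sum_sq_mul_self_sub_mul_self_le_of_moments hN h4t h4s hinc4
  have hoff := sum_sq_sum_abs_mul_sub_mul_le_of_moments hN h2t h2s hinc2
  have hA₂ : 0 ≤ A₂ := le_trans (by positivity) h2s
  have hB₂ : 0 ≤ B₂ * u ^ 2 := le_trans (by positivity) hinc2
  calc (n : ℝ) ^ 2 * dExp N p (fun sam => (htCovEst N p Y sam t t - htCov N p Y t t
        - htCovEst N p Y sam s s + htCov N p Y s s) ^ 2)
      ≤ (n : ℝ) ^ 2 * (((N : ℝ) ^ 2)⁻¹ ^ 2 *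
        (2 * ((1 + C₁ / n * N) * ((1 / lam ^ 2) ^ 2 * (N * u ^ 2 * √(16 * A₄ * B₄))))
          + 2 * ((D₄ * N + 4) *
            ((C₁ / n / lamstar / lam ^ 2) ^ 2 * (4 * N ^ 3 * A₂ * B₂ * u ^ 2))))) := by
        gcongr
        refine (hd.dExp_sq_covEst_increment_le Y hlam hπ1 hlamstar hπ2 (by positivity) hΔ' hD₄
          hdist s t).trans ?_
        simp only [mul_pow, sq_abs, ← Finset.mul_sum]
        gcongr
    _ = (n : ℝ) ^ 2 * (((N : ℝ) ^ 2)⁻¹ ^ 2 *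
        (2 * ((1 + C₁ / n * N) * ((1 / lam ^ 2) ^ 2 * u ^ 2 * √(16 * A₄ * B₄) * N))
          + 2 * ((D₄ * N + 4) *
            ((C₁ / lamstar / lam ^ 2) ^ 2 * (4 * A₂ * (B₂ * u ^ 2)) / n ^ 2 * N ^ 3)))) := by
        ring
    _ ≤ (2 * (1 + C₁) * ((1 / lam ^ 2) ^ 2 * u ^ 2 * √(16 * A₄ * B₄))
          + 8 * ((C₁ / lamstar / lam ^ 2) ^ 2 * (4 * A₂ * (B₂ * u ^ 2)))) * ((n : ℝ)⁻¹ + D₄) :=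
        sq_mul_inv_sq_sq_mul_le hnR (Nat.cast_le.mpr hnN) (by positivity) (by positivity) hC₁ hD₄
    _ = _ := by ring

/-- second-moment bound for the increments of the Horvitz–Thompson variance
estimator: there is a constant `C₁₁` depending only on `λ, λ*, C₁, C₂, C₃, C₄, C₅, β, T`
such that `n² E[(γ̂_N(t,t) - γ_N(t,t) - γ̂_N(s,s) + γ_N(s,s))²]
  ≤ C₁₁ (n⁻¹ + max_{(k,l,k',l') distinct} |E[(I_k I_l - π_{kl})(I_{k'} I_{l'} - π_{k'l'})]|)
      |t-s|^{2β}`,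
where the maximum is encoded by an arbitrary upper bound `D₄` over all distinct 4-tuples. -/
theorem cov_est_increment_variance_bound
    (lam lamstar C₁ C₂ C₃ C₄ C₅ β T : ℝ)
    (hlam : 0 < lam) (hlamstar : 0 < lamstar) (hC₁ : 0 < C₁) (hC₂ : 0 < C₂)
    (hC₃ : 0 < C₃) (hC₄ : 0 < C₄) (hC₅ : 0 < C₅) (hβ : 0 < β) (hT : 0 < T) :
    ∃ C₁₁ : ℝ, 0 < C₁₁ ∧
      ∀ (N n : ℕ) (Y : ℕ → ℝ → ℝ) (p : Finset ℕ → ℝ), IsDesign N n p → 0 < n → n ≤ N →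
      (∀ k, ContinuousOn (Y k) (Set.Icc 0 T)) →
      (∀ k ∈ Finset.range N, lam ≤ pi1 N p k) →
      (∀ k ∈ Finset.range N, ∀ l ∈ Finset.range N, k ≠ l → lamstar ≤ pi2 N p k l) →
      (∀ k ∈ Finset.range N, ∀ l ∈ Finset.range N, k ≠ l →
        (n : ℝ) * |Delta N p k l| ≤ C₁) →
      ((N : ℝ)⁻¹ * ∑ k ∈ Finset.range N, Y k 0 ^ 2 < C₂) →
      (∀ s ∈ Set.Icc (0 : ℝ) T, ∀ t ∈ Set.Icc (0 : ℝ) T,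
        (N : ℝ)⁻¹ * ∑ k ∈ Finset.range N, (Y k t - Y k s) ^ 2 ≤ C₃ * |t - s| ^ (2 * β)) →
      ((N : ℝ)⁻¹ * ∑ k ∈ Finset.range N, Y k 0 ^ 4 < C₄) →
      (∀ s ∈ Set.Icc (0 : ℝ) T, ∀ t ∈ Set.Icc (0 : ℝ) T,
        (N : ℝ)⁻¹ * ∑ k ∈ Finset.range N, (Y k t - Y k s) ^ 4 ≤ C₅ * |t - s| ^ (4 * β)) →
      ∀ D₄ : ℝ, 0 ≤ D₄ →
      (∀ k ∈ Finset.range N, ∀ l ∈ Finset.range N, ∀ k' ∈ Finset.range N,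
        ∀ l' ∈ Finset.range N,
          k ≠ l → k ≠ k' → k ≠ l' → l ≠ k' → l ≠ l' → k' ≠ l' →
          |dExp N p (fun sam => (ind k sam * ind l sam - pi2 N p k l) *
              (ind k' sam * ind l' sam - pi2 N p k' l'))| ≤ D₄) →
      ∀ s ∈ Set.Icc (0 : ℝ) T, ∀ t ∈ Set.Icc (0 : ℝ) T,
        (n : ℝ) ^ 2 * dExp N p (fun sam =>
            (htCovEst N p Y sam t t - htCov N p Y t t
              - htCovEst N p Y sam s s + htCov N p Y s s) ^ 2)
          ≤ C₁₁ * ((n : ℝ)⁻¹ + D₄) * |t - s| ^ (2 * β) := by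
  refine ⟨2 * (1 + C₁) * √(16 * (8 * (C₄ + C₅ * T ^ (4 * β))) * C₅) / lam ^ 4
      + 32 * (C₁ / (lamstar * lam ^ 2)) ^ 2 * (2 * (C₂ + C₃ * T ^ (2 * β))) * C₃,
    by positivity, ?_⟩
  intro N n Y p hd hn hnN _ hπ1 hπ2 hΔ hY2 hinc2 hY4 hinc4 D₄ hD₄ hdist s hs t ht
  have h0 : (0 : ℝ) ∈ Set.Icc 0 T := ⟨le_rfl, hT.le⟩
  have hA₂ : ∀ v ∈ Set.Icc 0 T, (N : ℝ)⁻¹ * ∑ k ∈ Finset.range N, Y k v ^ 2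
      ≤ 2 * (C₂ + C₃ * T ^ (2 * β)) := fun v hv =>
    (mean_pow_le_of_increment even_two hC₃.le (by positivity) hv hY2.le
      (hinc2 0 h0 v hv)).trans_eq (by norm_num)
  have hA₄ : ∀ v ∈ Set.Icc 0 T, (N : ℝ)⁻¹ * ∑ k ∈ Finset.range N, Y k v ^ 4
      ≤ 8 * (C₄ + C₅ * T ^ (4 * β)) := fun v hv =>
    (mean_pow_le_of_increment (by decide) hC₅.le (by positivity) hv hY4.le
      (hinc4 0 h0 v hv)).trans_eq (by norm_num)
  have hpow : ∀ m : ℕ, |t - s| ^ ((m : ℝ) * β) = (|t - s| ^ β) ^ m := fun m => by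
    rw [mul_comm, Real.rpow_mul_natCast (abs_nonneg _)]
  have h2 : |t - s| ^ (2 * β) = (|t - s| ^ β) ^ 2 := by exact_mod_cast hpow 2
  have h4 : |t - s| ^ (4 * β) = (|t - s| ^ β) ^ 4 := by exact_mod_cast hpow 4
  rw [h2]
  exact hd.sq_mul_dExp_covEst_increment_le Y hn hnN hlam hπ1 hlamstar hπ2 hC₁.le hΔ hD₄ hdist
    s t (hA₂ s hs) (hA₂ t ht) (hA₄ s hs) (hA₄ t ht) (h2 ▸ hinc2 s hs t ht) (h4 ▸ hinc4 s hs t ht)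

end
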